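/- Let m, l ≥ 3 with l odd, and let f: C_m → C_l be a graph homomorphism. Then the parity of deg f equals the parity of m; in particular, if m is odd then deg f ≠ 0. -/

import Mathlib

/-- The oriented edge `[u,v]` as an edge chain: the antisymmetrized generator. -/
noncomputable def oe {V : Type*} [DecidableEq V] (u v : V) : V × V →₀ ℤ :=
  Finsupp.single (u, v) 1 - Finsupp.single (v, u) 1

/-- The map on edge chains induced by a map on vertices. -/
noncomputable def fE {V W : Type*} [DecidableEq V] [DecidableEq W] (f : V → W) :
    (V × V →₀ ℤ) →+ (W × W →₀ ℤ) :=
  Finsupp.mapDomain.addMonoidHom (Prod.map f f)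

/-- Adjacency in the `m`-cycle on vertex set `ZMod m`. -/
def CycAdj (m : ℕ) (u v : ZMod m) : Prop := v = u + 1 ∨ v = u - 1

/-- The oriented cycle `O_m = [0,1] + [1,2] + ⋯ + [m-1,0]` as an edge chain. -/
noncomputable def cycO (m : ℕ) : ZMod m × ZMod m →₀ ℤ :=
  ∑ i ∈ Finset.range m, oe (i : ZMod m) ((i : ZMod m) + 1)

/-!
Count the forward edges `(u, u + 1)` of an edge chain on `C_l` modulo 2. Since `l ≥ 3`, every
oriented edge of `C_l`, in either orientation, is counted exactly once: `[u, u + 1]` contributes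
`1` and `[u, u - 1] = -[u - 1, u]` contributes `-1 ≡ 1`. Hence the count is `m` on the image of
`O_m` under a homomorphism, and `d · l ≡ d` on `d · O_l` because `l` is odd.
-/

noncomputable def forwardParity (l : ℕ) : (ZMod l × ZMod l →₀ ℤ) →+ ZMod 2 :=
  Finsupp.liftAddHom fun p => if p.2 = p.1 + 1 then Int.castAddHom (ZMod 2) else 0

lemma fE_oe {V W : Type*} [DecidableEq V] [DecidableEq W] (f : V → W) (u v : V) :
    fE f (oe u v) = oe (f u) (f v) := by
  simp [fE, oe, Finsupp.mapDomain_sub, Finsupp.mapDomain_single]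

lemma fE_id {V : Type*} [DecidableEq V] (c : V × V →₀ ℤ) : fE id c = c := by
  simp [fE]

lemma forwardParity_oe (l : ℕ) (u v : ZMod l) :
    forwardParity l (oe u v) = (if v = u + 1 then 1 else 0) - (if u = v + 1 then 1 else 0) := by
  simp only [forwardParity, oe, map_sub, Finsupp.liftAddHom_apply_single]
  split_ifs <;> simp

lemma ZMod.two_ne_zero_of_three_le {l : ℕ} (hl : 3 ≤ l) : (2 : ZMod l) ≠ 0 := by
  intro h
  have : l ∣ 2 := (ZMod.natCast_eq_zero_iff 2 l).1 (by exact_mod_cast h)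
  have := Nat.le_of_dvd two_pos this
  omega

lemma forwardParity_oe_of_cycAdj {l : ℕ} (hl : 3 ≤ l) {u v : ZMod l} (h : CycAdj l u v) :
    forwardParity l (oe u v) = 1 := by
  have h2 := ZMod.two_ne_zero_of_three_le hl
  rw [forwardParity_oe]
  rcases h with rfl | rfl
  · rw [if_pos rfl, if_neg fun h => h2 (by linear_combination -h)]
    rfl
  · rw [if_neg fun h => h2 (by linear_combination -h), if_pos (by ring)]
    rfl

lemma forwardParity_fE_cycO {m l : ℕ} (hl : 3 ≤ l) {f : ZMod m → ZMod l}
    (hf : ∀ u v, CycAdj m u v → CycAdj l (f u) (f v)) :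
    forwardParity l (fE f (cycO m)) = m := by
  rw [cycO, map_sum, map_sum]
  simp_rw [fE_oe, forwardParity_oe_of_cycAdj hl (hf _ _ (Or.inl rfl))]
  simp

lemma forwardParity_cycO {l : ℕ} (hl : 3 ≤ l) : forwardParity l (cycO l) = l := by
  simpa only [fE_id] using forwardParity_fE_cycO hl (f := id) fun _ _ h => h

theorem degree_parity_general (m l : ℕ) (hl : 3 ≤ l) (hlodd : Odd l)
    (f : ZMod m → ZMod l) (hf : ∀ u v, CycAdj m u v → CycAdj l (f u) (f v))
    (d : ℤ) (hd : fE f (cycO m) = d • cycO l) :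
    (Odd d ↔ Odd m) ∧ (Odd m → d ≠ 0) := by
  have hdm : (d : ZMod 2) = m := by
    have := congrArg (forwardParity l) hd
    rwa [forwardParity_fE_cycO hl hf, map_zsmul, forwardParity_cycO hl,
      hlodd.natCast_zmod_two, zsmul_one, eq_comm] at this
  have hodd : Odd d ↔ Odd m := by
    rw [← ZMod.intCast_eq_one_iff_odd, ← ZMod.natCast_eq_one_iff_odd, hdm]
  refine ⟨hodd, fun hm hd0 => ?_⟩
  subst hd0
  exact Int.not_odd_zero (hodd.2 hm)

/-- If `f : C_m → C_l` is a graph homomorphism (`m, l ≥ 3`, `l` odd) with degree `d`,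
then `d` has the same parity as `m`; in particular if `m` is odd then `d ≠ 0`. -/
theorem degree_parity (m l : ℕ) (hm : 3 ≤ m) (hl : 3 ≤ l) (hlodd : Odd l)
    (f : ZMod m → ZMod l) (hf : ∀ u v, CycAdj m u v → CycAdj l (f u) (f v))
    (d : ℤ) (hd : fE f (cycO m) = d • cycO l) :
    (Odd d ↔ Odd m) ∧ (Odd m → d ≠ 0) :=
  degree_parity_general m l hl hlodd f hf d hd
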